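/- Mass balance law for the convection–diffusion equation in an evolving domain: suppose u satisfies the PDE ∂ₜu(t,x) + div( β(t,·) u(t,·) )(x) − D·Δu(t,x) = f(t,x) for all t ∈ ℝ and all x ∈ Ω(t), and the integrated homogeneous Neumann condition ∫_{Ω(t)} Δu(t,x) dx = 0 for all t (which follows from the flux condition n·D∇u = 0 on ∂Ω(t) by the divergence theorem). Then for every t the function t ↦ ∫_{Ω(t)} u(t,x) dx is differentiable with derivative ∫_{Ω(t)} f(t,x) dx. -/

import Mathlib

/-!
Pull the integral over `Ω(t)` back to `Ω₀` by the change of variables `x = Φ(t, y)`. Its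
Jacobian `J = det DΦ` solves Liouville's equation `∂ₜJ = (div β ∘ Φ) J` with `J(0) = 1`, so it
stays positive, and differentiating `∫_{Ω₀} J · u ∘ Φ` under the integral sign gives the Reynolds
transport theorem `d/dt ∫_{Ω(t)} u = ∫_{Ω(t)} (∂ₜu + div(u β))`. By the equation the integrand
is `f + D Δu`, and the Neumann condition removes the diffusion term.
-/

open MeasureTheory

noncomputable section

/-- Euclidean space `ℝ^d`. -/
abbrev Euc (d : ℕ) : Type := EuclideanSpace ℝ (Fin d)

/-- Divergence of a vector field: the trace of its Fréchet derivative. -/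
noncomputable def vdiv {d : ℕ} (w : Euc d → Euc d) (x : Euc d) : ℝ :=
  LinearMap.trace ℝ (Euc d) (fderiv ℝ w x).toLinearMap

/-- Laplacian of a scalar function: the divergence of its gradient. -/
noncomputable def lapl {d : ℕ} (g : Euc d → ℝ) (x : Euc d) : ℝ :=
  LinearMap.trace ℝ (Euc d) (fderiv ℝ (gradient g) x).toLinearMap

section Jacobi

variable {𝕜 : Type*} [NontriviallyNormedField 𝕜] {n : Type*} [Fintype n] [DecidableEq n]

theorem Matrix.hasDerivAt_det {A : 𝕜 → Matrix n n 𝕜} {A' : Matrix n n 𝕜} {t : 𝕜}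
    (hA : ∀ i j, HasDerivAt (fun s => A s i j) (A' i j) t) :
    HasDerivAt (fun s => (A s).det) (∑ i, ((A t).updateRow i (A' i)).det) t := by
  have hdet (M : Matrix n n 𝕜) :
      M.det = ∑ σ : Equiv.Perm n, (Equiv.Perm.sign σ : 𝕜) * ∏ i, M i (σ i) := by
    rw [← M.det_transpose, Matrix.det_apply']
    rfl
  simp only [hdet]
  have hterm (σ : Equiv.Perm n) :
      HasDerivAt (fun s => (Equiv.Perm.sign σ : 𝕜) * ∏ i, A s i (σ i))
        ((Equiv.Perm.sign σ : 𝕜) * ∑ i, (∏ j ∈ Finset.univ.erase i, A t j (σ j)) • A' i (σ i)) t :=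
    (HasDerivAt.fun_finsetProd fun i _ => hA i (σ i)).const_mul _
  refine (HasDerivAt.fun_sum fun σ _ => hterm σ).congr_deriv ?_
  rw [Finset.sum_comm]
  refine Finset.sum_congr rfl fun σ _ => ?_
  rw [Finset.mul_sum]
  refine Finset.sum_congr rfl fun i _ => ?_
  have hprod : ∏ j, (A t).updateRow i (A' i) j (σ j)
      = A' i (σ i) * ∏ j ∈ Finset.univ.erase i, A t j (σ j) := by
    rw [← Finset.mul_prod_erase _ _ (Finset.mem_univ i), Matrix.updateRow_self]
    exact congrArg _ (Finset.prod_congr rfl fun j hj =>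
      by rw [Matrix.updateRow_ne (Finset.ne_of_mem_erase hj)])
  rw [hprod, smul_eq_mul]
  ring

theorem Matrix.sum_det_updateRow_mul {R : Type*} [CommRing R] (M B : Matrix n n R) :
    ∑ i, (M.updateRow i ((B * M) i)).det = B.trace * M.det := by
  have hrow (i : n) : (B * M) i = ∑ k, B i k • M k := by
    ext j
    simp [Matrix.mul_apply, Finset.sum_apply]
  simp only [hrow, Matrix.det_updateRow_sum, smul_eq_mul, Matrix.trace, Matrix.diag,
    Finset.sum_mul]

variable [CompleteSpace 𝕜] {E : Type*} [NormedAddCommGroup E] [NormedSpace 𝕜 E]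
  [FiniteDimensional 𝕜 E]

theorem ContinuousLinearMap.continuous_trace :
    Continuous fun T : E →L[𝕜] E => LinearMap.trace 𝕜 E T :=
  ((LinearMap.trace 𝕜 E).comp (ContinuousLinearMap.coeLM 𝕜)).continuous_of_finiteDimensional

theorem ContinuousLinearMap.hasDerivAt_det_of_hasDerivAt_comp {T : 𝕜 → E →L[𝕜] E}
    {B : E →L[𝕜] E} {t : 𝕜} (hT : HasDerivAt T (B ∘L T t) t) :
    HasDerivAt (fun s => (T s).det) (LinearMap.trace 𝕜 E B * (T t).det) t := by
  let b := Module.finBasis 𝕜 E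
  let mat : (E →L[𝕜] E) → Matrix (Fin _) (Fin _) 𝕜 := fun L => LinearMap.toMatrix b b L
  have hentry (i j) : HasDerivAt (fun s => mat (T s) i j) (mat (B ∘L T t) i j) t := by
    simp only [mat, LinearMap.toMatrix_apply]
    exact (LinearMap.toContinuousLinearMap (b.coord i)).hasFDerivAt.comp_hasDerivAt t
      ((ContinuousLinearMap.apply 𝕜 E (b j)).hasFDerivAt.comp_hasDerivAt t hT)
  simpa only [mat, ContinuousLinearMap.toLinearMap_comp, LinearMap.toMatrix_comp b b b,
    Matrix.sum_det_updateRow_mul, LinearMap.trace_eq_matrix_trace 𝕜 b, LinearMap.det_toMatrix,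
    ContinuousLinearMap.det] using Matrix.hasDerivAt_det hentry

end Jacobi

theorem eq_mul_exp_integral_of_hasDerivAt_mul {h c : ℝ → ℝ} (hc : Continuous c)
    (hh : ∀ s, HasDerivAt h (c s * h s) s) (t : ℝ) :
    h t = h 0 * Real.exp (∫ r in (0 : ℝ)..t, c r) := by
  set I : ℝ → ℝ := fun s => ∫ r in (0 : ℝ)..s, c r
  have hI (s : ℝ) : HasDerivAt I (c s) s := hc.integral_hasStrictDerivAt 0 s |>.hasDerivAt
  have hconst (s : ℝ) : HasDerivAt (fun r => h r * Real.exp (-I r)) 0 s := by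
    refine ((hh s).mul (hI s).neg.exp).congr_deriv ?_
    ring
  have hI0 : I 0 = 0 := intervalIntegral.integral_same
  have key := is_const_of_deriv_eq_zero (fun s => (hconst s).differentiableAt)
    (fun s => (hconst s).deriv) t 0
  rw [hI0, neg_zero, Real.exp_zero, mul_one] at key
  rw [← key, mul_assoc, ← Real.exp_add, neg_add_cancel, Real.exp_zero, mul_one]

theorem ContinuousLinearMap.det_pos_of_hasDerivAt_comp {E : Type*} [NormedAddCommGroup E]
    [NormedSpace ℝ E] [FiniteDimensional ℝ E] {T B : ℝ → E →L[ℝ] E}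
    (hB : Continuous B) (hT0 : T 0 = ContinuousLinearMap.id ℝ E)
    (hT : ∀ s, HasDerivAt T (B s ∘L T s) s) (t : ℝ) : 0 < (T t).det := by
  rw [eq_mul_exp_integral_of_hasDerivAt_mul (ContinuousLinearMap.continuous_trace.comp hB)
    (fun s => ContinuousLinearMap.hasDerivAt_det_of_hasDerivAt_comp (hT s)) t, hT0,
    ContinuousLinearMap.det, ContinuousLinearMap.coe_id, LinearMap.det_id, one_mul]
  exact Real.exp_pos _

section Partial

variable {E F : Type*} [NormedAddCommGroup E] [NormedSpace ℝ E]
  [NormedAddCommGroup F] [NormedSpace ℝ F]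

theorem ContDiff.uncurry_left {X : Type*} [NormedAddCommGroup X] [NormedSpace ℝ X]
    {u : X → E → F} {n : WithTop ℕ∞} (hu : ContDiff ℝ n (fun p : X × E => u p.1 p.2)) (x : X) :
    ContDiff ℝ n (u x) :=
  hu.comp (contDiff_const.prodMk contDiff_id)

theorem hasDerivAt_comp_of_differentiableAt_uncurry {u : ℝ → E → F} {γ : ℝ → E} {v : E}
    {s : ℝ} (hu : DifferentiableAt ℝ (fun p : ℝ × E => u p.1 p.2) (s, γ s))
    (hγ : HasDerivAt γ v s) :
    HasDerivAt (fun r => u r (γ r)) (deriv (fun r => u r (γ s)) s + fderiv ℝ (u s) (γ s) v) s := by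
  set L := fderiv ℝ (fun p : ℝ × E => u p.1 p.2) (s, γ s)
  have htime : HasDerivAt (fun r => u r (γ s)) (L (1, 0)) s :=
    hu.hasFDerivAt.comp_hasDerivAt (f := fun r => (r, γ s)) s
      ((hasDerivAt_id' s).prodMk (hasDerivAt_const s (γ s)))
  have hspace : fderiv ℝ (u s) (γ s) = L ∘L ContinuousLinearMap.inr ℝ ℝ E :=
    (hu.hasFDerivAt.comp (γ s) (hasFDerivAt_prodMk_right s (γ s))).fderiv
  rw [htime.deriv, hspace, ContinuousLinearMap.comp_apply, ContinuousLinearMap.inr_apply,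
    ← map_add, Prod.mk_add_mk, add_zero, zero_add]
  exact hu.hasFDerivAt.comp_hasDerivAt s ((hasDerivAt_id s).prodMk hγ)

theorem continuous_fderiv_of_contDiff_uncurry {X : Type*} [NormedAddCommGroup X]
    [NormedSpace ℝ X] {u : X → E → F} (hu : ContDiff ℝ 1 (fun p : X × E => u p.1 p.2)) :
    Continuous fun p : X × E => fderiv ℝ (u p.1) p.2 :=
  (ContDiff.fderiv (f := fun (p : X × E) (y : E) => u p.1 y)
    (hu.comp (contDiff_fst.fst.prodMk contDiff_snd)) contDiff_snd (zero_add _).le).continuous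

theorem continuous_deriv_of_contDiff_uncurry {u : ℝ → E → F}
    (hu : ContDiff ℝ 1 (fun p : ℝ × E => u p.1 p.2)) :
    Continuous fun p : ℝ × E => deriv (fun r => u r p.2) p.1 :=
  ((ContDiff.fderiv (f := fun (p : ℝ × E) (r : ℝ) => u r p.2)
    (hu.comp (contDiff_snd.prodMk contDiff_fst.snd)) contDiff_fst
    (zero_add _).le).continuous).clm_apply continuous_const

end Partial

theorem vdiv_smul {d : ℕ} {g : Euc d → ℝ} {w : Euc d → Euc d} {x : Euc d}
    (hg : DifferentiableAt ℝ g x) (hw : DifferentiableAt ℝ w x) :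
    vdiv (fun y => g y • w y) x = fderiv ℝ g x (w x) + g x * vdiv w x := by
  rw [vdiv, (hg.hasFDerivAt.fun_smul hw.hasFDerivAt).fderiv, vdiv]
  simp [add_comm]

theorem continuous_lapl {d : ℕ} {g : Euc d → ℝ} (hg : ContDiff ℝ 2 g) : Continuous (lapl g) := by
  have hgrad : ContDiff ℝ 1 (gradient g) :=
    (InnerProductSpace.toDual ℝ (Euc d)).symm.contDiff.comp (hg.fderiv_right le_rfl)
  exact ContinuousLinearMap.continuous_trace.comp (hgrad.continuous_fderiv one_ne_zero)

theorem hasDerivAt_setIntegral_of_continuous {X E : Type*} [MetricSpace X] [ProperSpace X]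
    [MeasurableSpace X] [OpensMeasurableSpace X] {μ : Measure X} [IsFiniteMeasureOnCompacts μ]
    [NormedAddCommGroup E] [NormedSpace ℝ E] {K : Set X} (hK : Bornology.IsBounded K)
    (hKm : MeasurableSet K) {F F' : ℝ → X → E} (hF : Continuous (Function.uncurry F))
    (hF' : Continuous (Function.uncurry F'))
    (hderiv : ∀ x ∈ K, ∀ s, HasDerivAt (F · x) (F' s x) s) (t : ℝ) :
    HasDerivAt (fun s => ∫ x in K, F s x ∂μ) (∫ x in K, F' t x ∂μ) t := by
  have hKc : IsCompact (closure K) := hK.isCompact_closure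
  have hint (s : ℝ) : IntegrableOn (F s) K μ :=
    ((hF.comp (Continuous.prodMk_right s)).continuousOn.integrableOn_compact hKc).mono_set
      subset_closure
  have : IsFiniteMeasure (μ.restrict K) := isFiniteMeasure_restrict.mpr hK.measure_lt_top.ne
  obtain ⟨C, hC⟩ := ((isCompact_closedBall t 1).prod hKc).exists_bound_of_continuousOn
    hF'.continuousOn
  refine (hasDerivAt_integral_of_dominated_loc_of_deriv_le (Metric.ball_mem_nhds t one_pos)
    (Filter.Eventually.of_forall fun s => (hint s).aestronglyMeasurable) (hint t)
    (hF'.comp (Continuous.prodMk_right t)).aestronglyMeasurable ?_ (integrable_const C)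
    ((ae_restrict_mem hKm).mono fun x hx s _ => hderiv x hx s)).2
  exact (ae_restrict_mem hKm).mono fun x hx s hs =>
    hC (s, x) ⟨Metric.ball_subset_closedBall hs, subset_closure hx⟩

theorem hasDerivAt_integral_image_flow {d : ℕ} {β Φ : ℝ → Euc d → Euc d}
    (hβ : ContDiff ℝ 1 (fun p : ℝ × Euc d => β p.1 p.2)) (hΦ0 : ∀ x, Φ 0 x = x)
    (hΦt : ∀ t x, HasDerivAt (fun s => Φ s x) (β t (Φ t x)) t)
    (hΦ : Continuous (fun p : ℝ × Euc d => Φ p.1 p.2)) (hΦinj : ∀ t, Function.Injective (Φ t))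
    {DΦ : ℝ → Euc d → Euc d →L[ℝ] Euc d} (hDΦ : ∀ t x, HasFDerivAt (Φ t) (DΦ t x) x)
    (hDΦcont : Continuous fun p : ℝ × Euc d => DΦ p.1 p.2)
    (hDΦt : ∀ t x, HasDerivAt (fun s => DΦ s x) ((fderiv ℝ (β t) (Φ t x)).comp (DΦ t x)) t)
    {Ω₀ : Set (Euc d)} (hΩ₀bdd : Bornology.IsBounded Ω₀) (hΩ₀ : MeasurableSet Ω₀)
    {u : ℝ → Euc d → ℝ} (hu : ContDiff ℝ 1 (fun p : ℝ × Euc d => u p.1 p.2)) (t : ℝ) :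
    HasDerivAt (fun s => ∫ x in Φ s '' Ω₀, u s x)
      (∫ x in Φ t '' Ω₀, (deriv (fun s => u s x) t + vdiv (fun y => u t y • β t y) x)) t := by
  set J : ℝ → Euc d → ℝ := fun s y => (DΦ s y).det
  have hΦflow : Continuous fun p : ℝ × Euc d => (p.1, Φ p.1 p.2) := continuous_fst.prodMk hΦ
  have hJ_pos (s y) : 0 < J s y := by
    have hDΦ0 : DΦ 0 y = ContinuousLinearMap.id ℝ (Euc d) :=
      (hDΦ 0 y).unique (by simpa [show Φ 0 = id from funext hΦ0] using hasFDerivAt_id y)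
    exact ContinuousLinearMap.det_pos_of_hasDerivAt_comp
      ((continuous_fderiv_of_contDiff_uncurry hβ).comp (hΦflow.comp (.prodMk_left y))) hDΦ0
      (hDΦt · y) s
  have hcov (s) (g : Euc d → ℝ) : ∫ x in Φ s '' Ω₀, g x = ∫ y in Ω₀, J s y * g (Φ s y) := by
    rw [integral_image_eq_integral_abs_det_fderiv_smul volume hΩ₀
      (fun x _ => (hDΦ s x).hasFDerivWithinAt) (hΦinj s).injOn g]
    exact setIntegral_congr_fun hΩ₀ fun y _ => by simp [J, abs_of_pos (hJ_pos s y)]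
  set L : ℝ → Euc d → ℝ := fun s x => deriv (fun r => u r x) s + vdiv (fun y => u s y • β s y) x
  have hL : Continuous (Function.uncurry L) :=
    (continuous_deriv_of_contDiff_uncurry hu).add
      (ContinuousLinearMap.continuous_trace.comp (continuous_fderiv_of_contDiff_uncurry
        (u := fun s y => u s y • β s y) (hu.smul hβ)))
  have hderiv (y s) : HasDerivAt (fun r => J r y * u r (Φ r y)) (J s y * L s (Φ s y)) s := by
    refine ((ContinuousLinearMap.hasDerivAt_det_of_hasDerivAt_comp (hDΦt s y)).mul
      (hasDerivAt_comp_of_differentiableAt_uncurry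
        (hu.differentiable one_ne_zero _) (hΦt s y))).congr_deriv ?_
    simp only [J, L]
    rw [vdiv_smul ((hu.uncurry_left s).differentiable one_ne_zero _)
      ((hβ.uncurry_left s).differentiable one_ne_zero _), vdiv]
    ring
  simp_rw [hcov]
  exact hasDerivAt_setIntegral_of_continuous (F := fun s y => J s y * u s (Φ s y))
    (F' := fun s y => J s y * L s (Φ s y)) hΩ₀bdd hΩ₀
    ((ContinuousLinearMap.continuous_det.comp hDΦcont).mul (hu.continuous.comp hΦflow))
    ((ContinuousLinearMap.continuous_det.comp hDΦcont).mul (hL.comp hΦflow))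
    (fun y _ s => hderiv y s) t

theorem mass_balance_convection_diffusion_general
    (d : ℕ)
    (β : ℝ → Euc d → Euc d)
    (hβ : ContDiff ℝ 1 (fun p : ℝ × Euc d => β p.1 p.2))
    (Φ : ℝ → Euc d → Euc d)
    (hΦ0 : ∀ x, Φ 0 x = x)
    (hΦt : ∀ t x, HasDerivAt (fun s => Φ s x) (β t (Φ t x)) t)
    (hΦC1 : ContDiff ℝ 1 (fun p : ℝ × Euc d => Φ p.1 p.2))
    (hΦinj : ∀ t : ℝ, Function.Injective (Φ t))
    (DΦ : ℝ → Euc d → Euc d →L[ℝ] Euc d)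
    (hDΦ : ∀ t x, HasFDerivAt (Φ t) (DΦ t x) x)
    (hDΦcont : Continuous fun p : ℝ × Euc d => DΦ p.1 p.2)
    (hDΦt : ∀ t x, HasDerivAt (fun s => DΦ s x)
        ((fderiv ℝ (β t) (Φ t x)).comp (DΦ t x)) t)
    (Ω₀ : Set (Euc d)) (hΩ₀bdd : Bornology.IsBounded Ω₀) (hΩ₀open : IsOpen Ω₀)
    (D : ℝ)
    (u : ℝ → Euc d → ℝ)
    (huC1 : ContDiff ℝ 1 (fun p : ℝ × Euc d => u p.1 p.2))
    (huC2 : ∀ t : ℝ, ContDiff ℝ 2 (u t))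
    (f : ℝ → Euc d → ℝ)
    (hfcont : Continuous (fun p : ℝ × Euc d => f p.1 p.2))
    (hPDE : ∀ t : ℝ, ∀ x ∈ Φ t '' Ω₀,
      deriv (fun s => u s x) t + vdiv (fun y => u t y • β t y) x - D * lapl (u t) x
        = f t x)
    (hNeumann : ∀ t : ℝ, ∫ x in Φ t '' Ω₀, lapl (u t) x = 0) :
    ∀ t : ℝ,
      HasDerivAt (fun s => ∫ x in Φ s '' Ω₀, u s x)
        (∫ x in Φ t '' Ω₀, f t x) t := by
  intro t
  have hΦ : Continuous (Φ t) := hΦC1.continuous.uncurry_left t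
  have hΩt : MeasurableSet (Φ t '' Ω₀) :=
    hΩ₀open.measurableSet.image_of_continuousOn_injOn hΦ.continuousOn (hΦinj t).injOn
  have hint {g : Euc d → ℝ} (hg : Continuous g) : IntegrableOn g (Φ t '' Ω₀) :=
    (hg.continuousOn.integrableOn_compact (hΩ₀bdd.isCompact_closure.image hΦ)).mono_set
      (Set.image_mono subset_closure)
  refine (hasDerivAt_integral_image_flow hβ hΦ0 hΦt hΦC1.continuous hΦinj hDΦ hDΦcont hDΦt
    hΩ₀bdd hΩ₀open.measurableSet huC1 t).congr_deriv ?_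
  calc ∫ x in Φ t '' Ω₀, (deriv (fun s => u s x) t + vdiv (fun y => u t y • β t y) x)
      = ∫ x in Φ t '' Ω₀, (f t x + D * lapl (u t) x) :=
        setIntegral_congr_fun hΩt fun x hx => by linarith [hPDE t x hx]
    _ = ∫ x in Φ t '' Ω₀, f t x := by
        rw [integral_add (hint (hfcont.uncurry_left t))
          ((hint (continuous_lapl (huC2 t))).const_mul D), integral_const_mul, hNeumann t,
          mul_zero, add_zero]

/-- Mass balance law for the convection–diffusion equation in an evolving domain:
if `∂ₜu + div(β u) − D Δu = f` on `Ω(t)` and `∫_{Ω(t)} Δu = 0` for all `t`, then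
`t ↦ ∫_{Ω(t)} u(t,x) dx` is differentiable with derivative `∫_{Ω(t)} f(t,x) dx`. -/
theorem mass_balance_convection_diffusion
    (d : ℕ) (hd : 1 ≤ d)
    (β : ℝ → Euc d → Euc d)
    (hβ : ContDiff ℝ 1 (fun p : ℝ × Euc d => β p.1 p.2))
    (hβbdd : ∃ C : ℝ, ∀ p : ℝ × Euc d,
      ‖fderiv ℝ (fun q : ℝ × Euc d => β q.1 q.2) p‖ ≤ C)
    (Φ : ℝ → Euc d → Euc d)
    (hΦ0 : ∀ x, Φ 0 x = x)
    (hΦt : ∀ t x, HasDerivAt (fun s => Φ s x) (β t (Φ t x)) t)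
    (hΦC1 : ContDiff ℝ 1 (fun p : ℝ × Euc d => Φ p.1 p.2))
    (hΦinj : ∀ t : ℝ, Function.Injective (Φ t))
    (DΦ : ℝ → Euc d → Euc d →L[ℝ] Euc d)
    (hDΦ : ∀ t x, HasFDerivAt (Φ t) (DΦ t x) x)
    (hDΦcont : Continuous fun p : ℝ × Euc d => DΦ p.1 p.2)
    (hDΦt : ∀ t x, HasDerivAt (fun s => DΦ s x)
        ((fderiv ℝ (β t) (Φ t x)).comp (DΦ t x)) t)
    (Ω₀ : Set (Euc d)) (hΩ₀bdd : Bornology.IsBounded Ω₀) (hΩ₀open : IsOpen Ω₀)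
    (D : ℝ) (hD : 0 < D)
    (u : ℝ → Euc d → ℝ)
    (huC1 : ContDiff ℝ 1 (fun p : ℝ × Euc d => u p.1 p.2))
    (huC2 : ∀ t : ℝ, ContDiff ℝ 2 (u t))
    (hubdd : ∃ C : ℝ, ∀ (t : ℝ) (x : Euc d),
      |u t x| ≤ C ∧ ‖fderiv ℝ (fun q : ℝ × Euc d => u q.1 q.2) (t, x)‖ ≤ C ∧
        ‖fderiv ℝ (gradient (u t)) x‖ ≤ C)
    (f : ℝ → Euc d → ℝ)
    (hfcont : Continuous (fun p : ℝ × Euc d => f p.1 p.2))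
    (hfbdd : ∃ C : ℝ, ∀ (t : ℝ) (x : Euc d), |f t x| ≤ C)
    (hPDE : ∀ t : ℝ, ∀ x ∈ Φ t '' Ω₀,
      deriv (fun s => u s x) t + vdiv (fun y => u t y • β t y) x - D * lapl (u t) x
        = f t x)
    (hNeumann : ∀ t : ℝ, ∫ x in Φ t '' Ω₀, lapl (u t) x = 0) :
    ∀ t : ℝ,
      HasDerivAt (fun s => ∫ x in Φ s '' Ω₀, u s x)
        (∫ x in Φ t '' Ω₀, f t x) t :=
  mass_balance_convection_diffusion_general d β hβ Φ hΦ0 hΦt hΦC1 hΦinj DΦ hDΦ hDΦcont hDΦt Ω₀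
    hΩ₀bdd hΩ₀open D u huC1 huC2 f hfcont hPDE hNeumann
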